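/- Let t ≥ 2 be an integer and suppose α, β are real numbers with 0 ≤ α < β ≤ 3/(t+1) and g(α) = g(β). Then α + β ≥ 4/(t+1); equivalently, 2 − (t+1)α ≤ (t+1)β − 2. -/

import Mathlib

/-!
With `s = 2/(t+1)`, `g` is strictly decreasing on `[0, s]`, and beyond `s` it stays below its
mirror image, `g (s + h) ≤ g (s - h)`: the difference `h ↦ g (s - h) - g (s + h)` vanishes at `0`
and has derivative `t(t+1) h ((1-s+h)^(t-2) - (1-s-h)^(t-2)) ≥ 0`. So if `α + β < 2s`, then
`β > s` (by injectivity of `g` on `[0, s]`) and `g α = g β ≤ g (2s - β)` with `α < 2s - β ≤ s`,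
contradicting strict monotonicity.
-/

/-- `g` is the derivative of `ρ ↦ ρ(1-ρ)^t`. -/
noncomputable def gfun (t : ℕ) (ρ : ℝ) : ℝ := (1 - ρ) ^ (t - 1) * (1 - ((t : ℝ) + 1) * ρ)

open Set

section

variable {t : ℕ}

lemma hasDerivAt_gfun (ht : 2 ≤ t) (ρ : ℝ) :
    HasDerivAt (gfun t) (-t * (1 - ρ) ^ (t - 2) * (2 - ((t : ℝ) + 1) * ρ)) ρ := by
  obtain ⟨n, rfl⟩ := Nat.exists_eq_add_of_le' ht
  have h := (((hasDerivAt_id' ρ).const_sub 1).fun_pow (n + 1)).fun_mul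
    (((hasDerivAt_id' ρ).const_mul (((n + 2 : ℕ) : ℝ) + 1)).const_sub 1)
  refine h.congr_deriv ?_
  simp only [Nat.add_sub_cancel]
  push_cast
  ring

lemma gfun_strictAntiOn (ht : 2 ≤ t) : StrictAntiOn (gfun t) (Icc 0 (2 / ((t : ℝ) + 1))) := by
  have htR : (2 : ℝ) ≤ t := by exact_mod_cast ht
  refine strictAntiOn_of_hasDerivWithinAt_neg (convex_Icc _ _)
    (fun x _ ↦ (hasDerivAt_gfun ht x).continuousAt.continuousWithinAt)
    (fun x _ ↦ (hasDerivAt_gfun ht x).hasDerivWithinAt) fun x hx ↦ ?_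
  rw [interior_Icc, mem_Ioo, lt_div_iff₀ (by positivity)] at hx
  have hx1 : 0 < 1 - x := by nlinarith
  have : 0 < (t : ℝ) * (1 - x) ^ (t - 2) * (2 - ((t : ℝ) + 1) * x) := by
    have := pow_pos hx1 (t - 2)
    have : 0 < 2 - ((t : ℝ) + 1) * x := by linarith
    positivity
  linarith

lemma hasDerivAt_gfun_sub_sub_gfun_add (ht : 2 ≤ t) (x : ℝ) :
    HasDerivAt (fun h ↦ gfun t (2 / ((t : ℝ) + 1) - h) - gfun t (2 / ((t : ℝ) + 1) + h))
      (t * ((t : ℝ) + 1) * x *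
        ((1 - 2 / ((t : ℝ) + 1) + x) ^ (t - 2) - (1 - 2 / ((t : ℝ) + 1) - x) ^ (t - 2))) x := by
  generalize hs : 2 / ((t : ℝ) + 1) = s
  have hts : ((t : ℝ) + 1) * s = 2 := by rw [← hs]; field_simp
  refine (((hasDerivAt_gfun ht (s - x)).comp_const_sub s x).sub
    ((hasDerivAt_gfun ht (s + x)).comp_const_add s x)).congr_deriv ?_
  linear_combination -((t : ℝ) * (1 - s + x) ^ (t - 2) + t * (1 - s - x) ^ (t - 2)) * hts

lemma gfun_add_le_gfun_sub (ht : 2 ≤ t) {h : ℝ} (hh₀ : 0 ≤ h) (hh₁ : h ≤ 1 - 2 / ((t : ℝ) + 1)) :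
    gfun t (2 / ((t : ℝ) + 1) + h) ≤ gfun t (2 / ((t : ℝ) + 1) - h) := by
  set s := 2 / ((t : ℝ) + 1)
  have hmono : MonotoneOn (fun h ↦ gfun t (s - h) - gfun t (s + h)) (Icc 0 (1 - s)) := by
    refine monotoneOn_of_hasDerivWithinAt_nonneg (convex_Icc _ _)
      (fun x _ ↦ (hasDerivAt_gfun_sub_sub_gfun_add ht x).continuousAt.continuousWithinAt)
      (fun x _ ↦ (hasDerivAt_gfun_sub_sub_gfun_add ht x).hasDerivWithinAt) fun x hx ↦ ?_
    rw [interior_Icc, mem_Ioo] at hx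
    have hpow : (1 - s - x) ^ (t - 2) ≤ (1 - s + x) ^ (t - 2) :=
      pow_le_pow_left₀ (by linarith) (by linarith) _
    have := sub_nonneg.2 hpow
    have : 0 ≤ x := hx.1.le
    positivity
  have := hmono ⟨le_rfl, hh₀.trans hh₁⟩ ⟨hh₀, hh₁⟩ hh₀
  simp only [sub_zero, add_zero, sub_self] at this
  linarith

end

/-- Lemma 3.8: if `0 ≤ α < β ≤ 3/(t+1)` and `g(α) = g(β)` then `α + β ≥ 4/(t+1)`. -/
theorem sym_lemma (t : ℕ) (ht : 2 ≤ t) (α β : ℝ)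
    (h0 : 0 ≤ α) (hab : α < β) (hb : β ≤ 3 / ((t : ℝ) + 1))
    (hg : gfun t α = gfun t β) :
    4 / ((t : ℝ) + 1) ≤ α + β := by
  set s := 2 / ((t : ℝ) + 1) with hs
  have h4 : 4 / ((t : ℝ) + 1) = 2 * s := by rw [hs]; ring
  have hb₂ : β ≤ 2 * s := hb.trans (h4 ▸ by gcongr; norm_num)
  have hb₁ : β ≤ 1 := hb.trans <| (div_le_one (by positivity)).2 <| by
    have : (2 : ℝ) ≤ t := by exact_mod_cast ht
    linarith
  rw [h4]
  rcases le_or_gt α s with hαs | hαs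
  · have hsβ : s < β := by
      by_contra! hβs
      exact hab.ne ((gfun_strictAntiOn ht).injOn ⟨h0, hαs⟩ ⟨by linarith, hβs⟩ hg)
    have hmirror : gfun t α ≤ gfun t (2 * s - β) := by
      rw [hg]
      convert gfun_add_le_gfun_sub ht (h := β - s) (by linarith) (by linarith) using 2 <;> ring
    have := ((gfun_strictAntiOn ht).le_iff_ge ⟨h0, hαs⟩ ⟨by linarith, by linarith⟩).1 hmirror
    linarith
  · linarith
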